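/- arXiv:1501.04748 — 3 statements merged into one kernel-verified Lean document; each statement's English description precedes it below -/
import Mathlib

section
/- Computation Lemma: Let Γ = (C, A, Δ) be a normed BPA system and let α, α', α'' be processes. If α ⟹ α' ⟹ α'' and α ≃ α'' (branching bisimilar), then α' ≃ α. -/
open Relation

/-- A BPA system over constants `C` and actions `A`: a distinguished silent
action `tau`, and a finite set of transition rules `X —ℓ→ α`, where `C` and
`A` are finite. -/
structure BPA (C A : Type) where
  tau : A
  rules : Set (C × A × List C)
  finC : Finite C
  finA : Finite A
  finRules : rules.Finite

namespace BPA

variable {C A : Type}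

/-- One-step labelled transition between processes.  Processes are strings
over `C` (lists, with the leftmost constant acting first). -/
def Step (Γ : BPA C A) (ℓ : A) (p q : List C) : Prop :=
  ∃ X γ β, (X, ℓ, γ) ∈ Γ.rules ∧ p = X :: β ∧ q = γ ++ β

/-- A transition carrying an arbitrary label. -/
def AnyStep (Γ : BPA C A) (p q : List C) : Prop := ∃ ℓ, Γ.Step ℓ p q

/-- `⟹` : the reflexive transitive closure of silent steps. -/
def TauStar (Γ : BPA C A) : List C → List C → Prop := ReflTransGen (Γ.Step Γ.tau)

/-- A process is normed if it can reach the empty process `ε`. -/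
def NormedProc (Γ : BPA C A) (p : List C) : Prop := ReflTransGen Γ.AnyStep p []

/-- The BPA system is normed. -/
def Normed (Γ : BPA C A) : Prop := ∀ X : C, Γ.NormedProc [X]

/-- A chain of `s`-steps starting at `start` in which every visited state is
related by `r` to the process `anchor`. -/
def RelChain (s : List C → List C → Prop) (r : List C → List C → Prop)
    (anchor : List C) : List C → List C → Prop :=
  ReflTransGen fun x y => s x y ∧ r anchor y

/-- Branching bisimulation (an equivalence relation by convention). -/
def IsBranchingBisim (Γ : BPA C A) (r : List C → List C → Prop) : Prop :=
  Equivalence r ∧ ∀ α β, r α β →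
    ((∀ a, a ≠ Γ.tau → ∀ α', Γ.Step a α α' →
        ∃ β'' β', RelChain (Γ.Step Γ.tau) r β β β'' ∧ Γ.Step a β'' β' ∧ r α' β') ∧
     (∀ α', Γ.Step Γ.tau α α' → ¬ r α α' →
        ∃ β'' β', RelChain (Γ.Step Γ.tau) r β β β'' ∧ Γ.Step Γ.tau β'' β' ∧
          ¬ r β'' β' ∧ r α' β'))

/-- Branching bisimilarity `≃` : the largest branching bisimulation. -/
def Bisim (Γ : BPA C A) (α β : List C) : Prop :=
  ∃ r, Γ.IsBranchingBisim r ∧ r α β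

/-- A ground process: it can silently reach `ε`. -/
def Ground (Γ : BPA C A) (p : List C) : Prop := Γ.TauStar p []

/-- The set `C_G` of ground constants. -/
def GroundC (Γ : BPA C A) : Set C := {X | Γ.Ground [X]}

/-- `R`-equality `=_R`: the two processes differ only in suffixes over `R`. -/
def REq (R : Set C) (α β : List C) : Prop :=
  ∃ ζ a b, α = ζ ++ a ∧ β = ζ ++ b ∧ (∀ X ∈ a, X ∈ R) ∧ (∀ X ∈ b, X ∈ R)

open Classical in
/-- The `R`-normal form `α_R` of a process: delete the maximal suffix over `R`. -/
noncomputable def nf (R : Set C) (α : List C) : List C :=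
  (α.reverse.dropWhile fun X => decide (X ∈ R)).reverse

/-- A process is in `R`-normal form. -/
def InNF (R : Set C) (α : List C) : Prop := nf R α = α

/-- The `R`-transition relation `—ℓ→_R` between `R`-normal forms. -/
def StepR (Γ : BPA C A) (R : Set C) (ℓ : A) (ζ η : List C) : Prop :=
  ∃ α β, ζ = nf R α ∧ η = nf R β ∧ Γ.Step ℓ α β

/-- `⟹_R`. -/
def TauStarR (Γ : BPA C A) (R : Set C) : List C → List C → Prop :=
  ReflTransGen (Γ.StepR R Γ.tau)

/-- `R`-bisimulation: an equivalence relation containing `=_R` satisfying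
ground preservation and the relativized branching transfer conditions. -/
def IsRBisim (Γ : BPA C A) (R : Set C) (r : List C → List C → Prop) : Prop :=
  Equivalence r ∧ (∀ α β, REq R α β → r α β) ∧
  ∀ α β, r α β →
    ((Γ.TauStar α [] → Γ.TauStar β []) ∧
     (∀ α', Γ.Step Γ.tau α α' → ¬ r α α' →
        ∃ β'' β', RelChain (Γ.StepR R Γ.tau) r β (nf R β) β'' ∧
          Γ.StepR R Γ.tau β'' β' ∧ ¬ r β'' β' ∧ r α' β') ∧
     (∀ a, a ≠ Γ.tau → ∀ α', Γ.Step a α α' →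
        ∃ β'' β', RelChain (Γ.StepR R Γ.tau) r β (nf R β) β'' ∧
          Γ.StepR R a β'' β' ∧ r α' β'))

/-- `R`-bisimilarity `≃_R` : the largest `R`-bisimulation. -/
def RBisim (Γ : BPA C A) (R : Set C) (α β : List C) : Prop :=
  ∃ r, Γ.IsRBisim R r ∧ r α β

/-- `Id_R = {X ∈ C : X ≃_R ε}`. -/
def IdR (Γ : BPA C A) (R : Set C) : Set C := {X | Γ.RBisim R [X] []}

/-- `Rd_R(γ) = {X ∈ C : Xγ ≃_R γ}`. -/
def RdR (Γ : BPA C A) (R : Set C) (γ : List C) : Set C :=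
  {X | Γ.RBisim R (X :: γ) γ}

/-- An admissible reference set: `R = Id_R`. -/
def Admissible (Γ : BPA C A) (R : Set C) : Prop := R = Γ.IdR R

end BPA

/-!
Let `r` be a branching bisimulation with `α r α''`, and let `P` be the set of processes
`r`-related to some state on a silent path `α ⟹ γ ⟹ α''`. A member of `P` related to the
path state `δ` can simulate `δ ⟹ α''` and then, since `α'' r α`, the path `α ⟹ γ`; so it moves
silently, without leaving `P`, to a process `r`-related to any prescribed path state `γ`.
This is exactly what is needed for `r ∪ P × P` to be a branching bisimulation again, and it
relates `α'` to `α`.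
-/

namespace BPA

variable {C A : Type} {Γ : BPA C A} {r : List C → List C → Prop}

theorem RelChain.rel_anchor {s : List C → List C → Prop} {a x y : List C}
    (h : RelChain s r a x y) (hx : r a x) : r a y := by
  rcases ReflTransGen.cases_tail h with rfl | ⟨_, _, _, hy⟩
  exacts [hx, hy]

theorem RelChain.mono_rel {s r' : List C → List C → Prop} {a b x y : List C}
    (h : RelChain s r a x y) (hr : ∀ z, r a z → r' b z) : RelChain s r' b x y :=
  ReflTransGen.mono (fun _ _ hpq => ⟨hpq.1, hr _ hpq.2⟩) _ _ h

namespace IsBranchingBisim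

theorem equivalence (hr : Γ.IsBranchingBisim r) : Equivalence r := hr.1

theorem transfer_visible (hr : Γ.IsBranchingBisim r) {α β : List C} (hαβ : r α β) {a : A}
    (ha : a ≠ Γ.tau) {α' : List C} (hα' : Γ.Step a α α') :
    ∃ β'' β', RelChain (Γ.Step Γ.tau) r β β β'' ∧ Γ.Step a β'' β' ∧ r α' β' :=
  (hr.2 α β hαβ).1 a ha α' hα'

theorem transfer_tau (hr : Γ.IsBranchingBisim r) {α β : List C} (hαβ : r α β) {α' : List C}
    (hα' : Γ.Step Γ.tau α α') (hne : ¬ r α α') :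
    ∃ β'' β', RelChain (Γ.Step Γ.tau) r β β β'' ∧ Γ.Step Γ.tau β'' β' ∧
      ¬ r β'' β' ∧ r α' β' :=
  (hr.2 α β hαβ).2 α' hα' hne

theorem exists_tauStar_of_tauStar (hr : Γ.IsBranchingBisim r) {v v' : List C}
    (h : Γ.TauStar v v') {u : List C} (hvu : r v u) :
    ∃ u', ReflTransGen (fun p q => Γ.Step Γ.tau p q ∧
        ∃ w, Γ.TauStar v w ∧ Γ.TauStar w v' ∧ r w q) u u' ∧ r v' u' := by
  induction h using ReflTransGen.head_induction_on generalizing u with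
  | refl => exact ⟨u, .refl, hvu⟩
  | @head a c hac hcv' ih =>
    have lift : ∀ {u₁ u₂}, ReflTransGen (fun p q => Γ.Step Γ.tau p q ∧
          ∃ w, Γ.TauStar c w ∧ Γ.TauStar w v' ∧ r w q) u₁ u₂ →
        ReflTransGen (fun p q => Γ.Step Γ.tau p q ∧
          ∃ w, Γ.TauStar a w ∧ Γ.TauStar w v' ∧ r w q) u₁ u₂ :=
      ReflTransGen.mono (fun _ _ ⟨hs, w, hcw, hwv', hw⟩ => ⟨hs, w, .head hac hcw, hwv', hw⟩) _ _
    by_cases hrac : r a c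
    · obtain ⟨u', hchain, hu'⟩ := ih (hr.equivalence.trans (hr.equivalence.symm hrac) hvu)
      exact ⟨u', lift hchain, hu'⟩
    · obtain ⟨u'', u₁, hchain, hstep, -, hcu₁⟩ := hr.transfer_tau hvu hac hrac
      obtain ⟨u', hchain', hu'⟩ := ih hcu₁
      have stutter : ReflTransGen (fun p q => Γ.Step Γ.tau p q ∧
          ∃ w, Γ.TauStar a w ∧ Γ.TauStar w v' ∧ r w q) u u'' :=
        ReflTransGen.mono (fun _ _ ⟨hs, hq⟩ =>
          ⟨hs, a, .refl, .head hac hcv', hr.equivalence.trans hvu hq⟩) _ _ hchain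
      exact ⟨u', (stutter.tail ⟨hstep, c, .single hac, hcv', hcu₁⟩).trans (lift hchain'), hu'⟩

end IsBranchingBisim

def mergeRel (r : List C → List C → Prop) (P : List C → Prop) (x y : List C) : Prop :=
  r x y ∨ (P x ∧ P y)

def SilentlyConnected (Γ : BPA C A) (r : List C → List C → Prop) (P : List C → Prop) : Prop :=
  ∀ x y, P x → P y → ∃ w, ReflTransGen (fun p q => Γ.Step Γ.tau p q ∧ P q) y w ∧ r x w

section mergeRel

variable {P : List C → Prop}

theorem equivalence_mergeRel (hr : Equivalence r) (hP : ∀ {a b}, r a b → P b → P a) :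
    Equivalence (mergeRel r P) where
  refl x := .inl (hr.refl x)
  symm
    | .inl h => .inl (hr.symm h)
    | .inr ⟨hx, hy⟩ => .inr ⟨hy, hx⟩
  trans
    | .inl hxy, .inl hyz => .inl (hr.trans hxy hyz)
    | .inl hxy, .inr ⟨hy, hz⟩ => .inr ⟨hP hxy hy, hz⟩
    | .inr ⟨hx, hy⟩, .inl hyz => .inr ⟨hx, hP (hr.symm hyz) hy⟩
    | .inr ⟨hx, _⟩, .inr ⟨_, hz⟩ => .inr ⟨hx, hz⟩

variable (hr : Γ.IsBranchingBisim r) (hP : ∀ {a b}, r a b → P b → P a)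
include hr hP

theorem transfer_mergeRel_of_not_mem {x y : List C} (hxy : r x y) (hx : ¬ P x) :
    (∀ a, a ≠ Γ.tau → ∀ x', Γ.Step a x x' → ∃ y'' y',
        RelChain (Γ.Step Γ.tau) (mergeRel r P) y y y'' ∧ Γ.Step a y'' y' ∧ mergeRel r P x' y') ∧
    (∀ x', Γ.Step Γ.tau x x' → ¬ mergeRel r P x x' → ∃ y'' y',
        RelChain (Γ.Step Γ.tau) (mergeRel r P) y y y'' ∧ Γ.Step Γ.tau y'' y' ∧
          ¬ mergeRel r P y'' y' ∧ mergeRel r P x' y') := by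
  refine ⟨fun a ha x' hx' => ?_, fun x' hx' hne => ?_⟩
  · obtain ⟨y'', y', hchain, hstep, hx'y'⟩ := hr.transfer_visible hxy ha hx'
    exact ⟨y'', y', hchain.mono_rel fun _ => .inl, hstep, .inl hx'y'⟩
  · obtain ⟨y'', y', hchain, hstep, hne', hx'y'⟩ := hr.transfer_tau hxy hx' (hne ∘ .inl)
    have hy'' : ¬ P y'' := fun h =>
      hx (hP hxy (hP (hchain.rel_anchor (hr.equivalence.refl y)) h))
    refine ⟨y'', y', hchain.mono_rel fun _ => .inl, hstep, ?_, .inl hx'y'⟩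
    rintro (h | ⟨h, -⟩)
    exacts [hne' h, hy'' h]

theorem isBranchingBisim_mergeRel (hconn : SilentlyConnected Γ r P) :
    Γ.IsBranchingBisim (mergeRel r P) := by
  refine ⟨equivalence_mergeRel hr.equivalence hP, fun x y hxy => ?_⟩
  by_cases hx : P x
  swap
  · exact transfer_mergeRel_of_not_mem hr hP (hxy.resolve_right fun h => hx h.1) hx
  have hy : P y := hxy.elim (fun h => hP (hr.equivalence.symm h) hx) And.right
  obtain ⟨w, hyw, hxw⟩ := hconn x y hx hy
  have hw : P w := hP (hr.equivalence.symm hxw) hx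
  have reach : ∀ {w''}, RelChain (Γ.Step Γ.tau) r w w w'' →
      RelChain (Γ.Step Γ.tau) (mergeRel r P) y y w'' := fun hchain =>
    (ReflTransGen.mono (fun _ _ ⟨hs, hq⟩ => ⟨hs, .inr ⟨hy, hq⟩⟩) _ _ hyw).trans
      (hchain.mono_rel fun _ hz => .inr ⟨hy, hP (hr.equivalence.symm hz) hw⟩)
  refine ⟨fun a ha x' hx' => ?_, fun x' hx' hne => ?_⟩
  · obtain ⟨w'', w', hchain, hstep, hx'w'⟩ := hr.transfer_visible hxw ha hx'
    exact ⟨w'', w', reach hchain, hstep, .inl hx'w'⟩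
  · obtain ⟨w'', w', hchain, hstep, hne', hx'w'⟩ := hr.transfer_tau hxw hx' (hne ∘ .inl)
    refine ⟨w'', w', reach hchain, hstep, ?_, .inl hx'w'⟩
    rintro (h | ⟨-, h⟩)
    exacts [hne' h, hne (.inr ⟨hx, hP hx'w' h⟩)]

end mergeRel

def pathClass (Γ : BPA C A) (r : List C → List C → Prop) (α α'' z : List C) : Prop :=
  ∃ γ, Γ.TauStar α γ ∧ Γ.TauStar γ α'' ∧ r z γ

theorem pathClass_of_rel (hr : Equivalence r) {α α'' a b : List C} (hab : r a b)
    (hb : pathClass Γ r α α'' b) : pathClass Γ r α α'' a :=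
  let ⟨γ, hαγ, hγα'', hbγ⟩ := hb
  ⟨γ, hαγ, hγα'', hr.trans hab hbγ⟩

theorem silentlyConnected_pathClass (hr : Γ.IsBranchingBisim r) {α α'' : List C}
    (hαα'' : r α α'') : SilentlyConnected Γ r (pathClass Γ r α α'') := by
  intro x y hx hy
  have hr' := hr.equivalence
  obtain ⟨γ, hαγ, hγα'', hxγ⟩ := hx
  obtain ⟨δ, hαδ, hδα'', hyδ⟩ := hy
  obtain ⟨w₁, hyw₁, hα''w₁⟩ := hr.exists_tauStar_of_tauStar hδα'' (hr'.symm hyδ)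
  obtain ⟨w, hw₁w, hγw⟩ := hr.exists_tauStar_of_tauStar hαγ (hr'.trans hαα'' hα''w₁)
  refine ⟨w, .trans (ReflTransGen.mono ?_ _ _ hyw₁) (ReflTransGen.mono ?_ _ _ hw₁w),
    hr'.trans hxγ hγw⟩
  · exact fun _ _ ⟨hs, v, hδv, hvα'', hvq⟩ => ⟨hs, v, hαδ.trans hδv, hvα'', hr'.symm hvq⟩
  · exact fun _ _ ⟨hs, v, hαv, hvγ, hvq⟩ => ⟨hs, v, hαv, hvγ.trans hγα'', hr'.symm hvq⟩

end BPA

theorem computation_lemma_general {C A : Type} (Γ : BPA C A)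
    (α α' α'' : List C) (h1 : Γ.TauStar α α') (h2 : Γ.TauStar α' α'')
    (h3 : Γ.Bisim α α'') : Γ.Bisim α' α := by
  obtain ⟨r, hr, hαα''⟩ := h3
  have hclosed : ∀ {a b}, r a b → BPA.pathClass Γ r α α'' b → BPA.pathClass Γ r α α'' a :=
    BPA.pathClass_of_rel hr.equivalence
  refine ⟨BPA.mergeRel r (BPA.pathClass Γ r α α''),
    BPA.isBranchingBisim_mergeRel hr hclosed (BPA.silentlyConnected_pathClass hr hαα''),
    .inr ⟨?_, ?_⟩⟩
  · exact ⟨α', h1, h2, hr.equivalence.refl α'⟩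
  · exact ⟨α, .refl, h1.trans h2, hr.equivalence.refl α⟩

/-- **Computation Lemma.**  In a normed BPA system, if `α ⟹ α' ⟹ α''` and
`α ≃ α''`, then `α' ≃ α`. -/
theorem computation_lemma {C A : Type} (Γ : BPA C A) (hΓ : Γ.Normed)
    (α α' α'' : List C) (h1 : Γ.TauStar α α') (h2 : Γ.TauStar α' α'')
    (h3 : Γ.Bisim α α'') : Γ.Bisim α' α :=
  computation_lemma_general Γ α α' α'' h1 h2 h3
end

section
/- Let Γ = (C, A, Δ) be a normed BPA system and for a process γ let Rd(γ) = {X ∈ C : Xγ ≃ γ}. If γ1 and γ2 are processes with Rd(γ1) = Rd(γ2), then for all processes α, β: αγ1 ≃ βγ1 if and only if αγ2 ≃ βγ2. -/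
open Relation

/-!
The argument runs through semi-branching bisimilarity, which coincides with `≃` but whose
transfer condition says nothing about the states passed on the way, so that relations built by
hand are easily checked to be bisimulations.

In a normed system, `aγ ≃ γ` forces `a ⟹ ε`: `γ` needs at least as many visible actions to
terminate as `aγ` does, so none can be spent on `a`. By stuttering every suffix of a redundant `a`
is then redundant as well, and induction on `a` shows that `Rd(γ)` determines the redundant strings:
`aγ₁ ≃ γ₁ ↔ aγ₂ ≃ γ₂`. Finally `≃` together with all pairs `(aγ₂, bγ₂)` with `aγ₁ ≃ bγ₁` is a
semi-branching bisimulation. Redundant pairs are covered by the previous fact; if `aγ₁` is not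
redundant, the branching answer of `bγ₁` passes only through states `≃ bγ₁`, none of which is
`γ₁`, so the answer is performed by `b` alone and can be replayed over `γ₂`.
-/

namespace BPA

variable {C A : Type}

def SemiAnswer (Γ : BPA C A) (r : List C → List C → Prop) (x y : List C) (ℓ : A)
    (x' : List C) : Prop :=
  (ℓ = Γ.tau ∧ ∃ y', Γ.TauStar y y' ∧ r x y' ∧ r x' y') ∨
    ∃ y'' y', Γ.TauStar y y'' ∧ Γ.Step ℓ y'' y' ∧ r x y'' ∧ r x' y'

def IsSemiBranchingSim (Γ : BPA C A) (r : List C → List C → Prop) : Prop :=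
  ∀ ⦃x y⦄, r x y → ∀ ⦃ℓ x'⦄, Γ.Step ℓ x x' → Γ.SemiAnswer r x y ℓ x'

def SemiBisim (Γ : BPA C A) (x y : List C) : Prop :=
  ∃ r, Γ.IsSemiBranchingSim r ∧ (∀ ⦃x y⦄, r x y → r y x) ∧ r x y

inductive Terminates (Γ : BPA C A) : List C → ℕ → Prop
  | nil : Terminates Γ [] 0
  | tau {p q n} : Γ.Step Γ.tau p q → Terminates Γ q n → Terminates Γ p n
  | visible {p q n a} : a ≠ Γ.tau → Γ.Step a p q → Terminates Γ q n → Terminates Γ p (n + 1)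

variable {Γ : BPA C A} {r s : List C → List C → Prop} {ℓ : A}
  {a b d e p q x y z x' γ γ₁ γ₂ : List C} {n : ℕ}

theorem not_step_nil (ℓ : A) (q : List C) : ¬ Γ.Step ℓ [] q := by
  rintro ⟨X, γ, β, -, h, -⟩
  cases h

theorem Step.append_right (h : Γ.Step ℓ p q) (r : List C) : Γ.Step ℓ (p ++ r) (q ++ r) := by
  obtain ⟨X, g, β, hr, rfl, rfl⟩ := h
  exact ⟨X, g, β ++ r, hr, rfl, by simp⟩

theorem Step.of_append (h : Γ.Step ℓ (a ++ γ) q) (ha : a ≠ []) :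
    ∃ a', Γ.Step ℓ a a' ∧ q = a' ++ γ := by
  obtain ⟨X, ζ, β, hr, hp, rfl⟩ := h
  obtain ⟨Y, t, rfl⟩ := List.exists_cons_of_ne_nil ha
  obtain ⟨rfl, rfl⟩ := List.cons_eq_cons.mp hp
  exact ⟨ζ ++ t, ⟨Y, ζ, t, hr, rfl, rfl⟩, by simp⟩

theorem TauStar.append_right (h : Γ.TauStar p q) (r : List C) :
    Γ.TauStar (p ++ r) (q ++ r) :=
  ReflTransGen.lift (· ++ r) (fun _ _ hs => hs.append_right r) _ _ h

theorem eq_nil_of_tauStar_nil (h : Γ.TauStar [] q) : q = [] := by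
  rcases h.cases_head with rfl | ⟨_, hs, -⟩
  · rfl
  · exact absurd hs (not_step_nil _ _)

theorem RelChain.reflTransGen {anchor : List C} (h : RelChain s r anchor x y) :
    ReflTransGen s x y :=
  ReflTransGen.mono (fun _ _ h => h.1) _ _ h

theorem RelChain.rel {anchor : List C} (hx : r anchor x) (h : RelChain s r anchor x y) :
    r anchor y := by
  rcases h.cases_tail with rfl | ⟨_, -, hlast⟩
  exacts [hx, hlast.2]

theorem Normed.normedProc (hn : Γ.Normed) (p : List C) : Γ.NormedProc p := by
  induction p with
  | nil => exact ReflTransGen.refl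
  | cons X t ih =>
    exact (ReflTransGen.lift (· ++ t) (fun _ _ ⟨ℓ, hs⟩ => ⟨ℓ, hs.append_right t⟩) _ _
      (hn X)).trans ih

namespace Terminates

theorem of_tauStar (h : Γ.TauStar p q) (hq : Γ.Terminates q n) : Γ.Terminates p n := by
  induction h using ReflTransGen.head_induction_on with
  | refl => exact hq
  | head hs _ ih => exact .tau hs ih

theorem append_split (h : Γ.Terminates (a ++ γ) n) :
    ∃ k l, k + l = n ∧ Γ.Terminates a k ∧ Γ.Terminates γ l := by
  generalize hp : a ++ γ = p at h
  induction h generalizing a with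
  | nil =>
    obtain ⟨rfl, rfl⟩ := List.append_eq_nil_iff.mp hp
    exact ⟨0, 0, rfl, .nil, .nil⟩
  | @tau _ _ n hs hq ih =>
    subst hp
    rcases eq_or_ne a [] with rfl | ha
    · exact ⟨0, n, by simp, .nil, .tau hs hq⟩
    · obtain ⟨a', hs', rfl⟩ := hs.of_append ha
      obtain ⟨k, l, hkl, hk, hl⟩ := ih rfl
      exact ⟨k, l, hkl, .tau hs' hk, hl⟩
  | @visible _ _ n _ hℓ hs hq ih =>
    subst hp
    rcases eq_or_ne a [] with rfl | ha
    · exact ⟨0, n + 1, by simp, .nil, .visible hℓ hs hq⟩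
    · obtain ⟨a', hs', rfl⟩ := hs.of_append ha
      obtain ⟨k, l, hkl, hk, hl⟩ := ih rfl
      exact ⟨k + 1, l, by omega, .visible hℓ hs' hk, hl⟩

end Terminates

theorem terminates_zero_iff : Γ.Terminates p 0 ↔ Γ.Ground p := by
  constructor
  · intro h
    generalize hn : 0 = n at h
    induction h with
    | nil => exact ReflTransGen.refl
    | tau hs _ ih => exact ReflTransGen.head hs (ih hn)
    | visible => omega
  · intro h
    exact Terminates.of_tauStar h .nil

theorem Ground.of_append (h : Γ.Ground (a ++ γ)) : Γ.Ground a ∧ Γ.Ground γ := by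
  obtain ⟨k, l, hkl, hk, hl⟩ := (terminates_zero_iff.2 h).append_split
  obtain ⟨rfl, rfl⟩ : k = 0 ∧ l = 0 := by omega
  exact ⟨terminates_zero_iff.1 hk, terminates_zero_iff.1 hl⟩

theorem NormedProc.exists_terminates (h : Γ.NormedProc p) : ∃ n, Γ.Terminates p n := by
  induction h using ReflTransGen.head_induction_on with
  | refl => exact ⟨0, .nil⟩
  | head hs _ ih =>
    obtain ⟨n, hn⟩ := ih
    obtain ⟨ℓ, hs⟩ := hs
    by_cases hℓ : ℓ = Γ.tau
    · exact ⟨n, .tau (hℓ ▸ hs) hn⟩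
    · exact ⟨n + 1, .visible hℓ hs hn⟩

namespace SemiAnswer

theorem mono (hrs : r ≤ s) (h : Γ.SemiAnswer r x y ℓ x') : Γ.SemiAnswer s x y ℓ x' := by
  rcases h with ⟨hℓ, y', hy, h₁, h₂⟩ | ⟨y'', y', hy, hs, h₁, h₂⟩
  · exact .inl ⟨hℓ, y', hy, hrs _ _ h₁, hrs _ _ h₂⟩
  · exact .inr ⟨y'', y', hy, hs, hrs _ _ h₁, hrs _ _ h₂⟩

theorem of_tauStar (hyz : Γ.TauStar y z) (h : Γ.SemiAnswer r x z ℓ x') :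
    Γ.SemiAnswer r x y ℓ x' := by
  rcases h with ⟨hℓ, y', hy, h₁, h₂⟩ | ⟨y'', y', hy, hs, h₁, h₂⟩
  · exact .inl ⟨hℓ, y', hyz.trans hy, h₁, h₂⟩
  · exact .inr ⟨y'', y', hyz.trans hy, hs, h₁, h₂⟩

theorem exists_tauStar (h : Γ.SemiAnswer r x y Γ.tau x') : ∃ y', Γ.TauStar y y' ∧ r x' y' := by
  rcases h with ⟨-, y', hy, -, h'⟩ | ⟨y'', y', hy, hs, -, h'⟩
  exacts [⟨y', hy, h'⟩, ⟨y', hy.tail hs, h'⟩]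

end SemiAnswer

theorem IsSemiBranchingSim.exists_tauStar (hr : Γ.IsSemiBranchingSim r) (hxy : r x y)
    (h : Γ.TauStar x x') : ∃ y', Γ.TauStar y y' ∧ r x' y' := by
  induction h using ReflTransGen.head_induction_on generalizing y with
  | refl => exact ⟨y, ReflTransGen.refl, hxy⟩
  | head hs _ ih =>
    obtain ⟨y₁, hy₁, h₁⟩ := (hr hxy hs).exists_tauStar
    obtain ⟨y', hy', h'⟩ := ih h₁
    exact ⟨y', hy₁.trans hy', h'⟩

theorem IsSemiBranchingSim.comp (hr : Γ.IsSemiBranchingSim r) (hs : Γ.IsSemiBranchingSim s) :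
    Γ.IsSemiBranchingSim (Comp r s) := by
  rintro x z ⟨y, hxy, hyz⟩ ℓ x' hstep
  rcases hr hxy hstep with ⟨hℓ, y₁, hy, h₁, h₂⟩ | ⟨y₁, y₂, hy, hy₁, h₁, h₂⟩
  · obtain ⟨z₁, hz, hz₁⟩ := hs.exists_tauStar hyz hy
    exact .inl ⟨hℓ, z₁, hz, ⟨y₁, h₁, hz₁⟩, ⟨y₁, h₂, hz₁⟩⟩
  · obtain ⟨z₁, hz, hz₁⟩ := hs.exists_tauStar hyz hy
    refine SemiAnswer.of_tauStar hz ?_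
    rcases hs hz₁ hy₁ with ⟨hℓ, z₂, hz', h₃, h₄⟩ | ⟨z₂, z₃, hz', hz₂, h₃, h₄⟩
    · exact .inl ⟨hℓ, z₂, hz', ⟨y₁, h₁, h₃⟩, ⟨y₂, h₂, h₄⟩⟩
    · exact .inr ⟨z₂, z₃, hz', hz₂, ⟨y₁, h₁, h₃⟩, ⟨y₂, h₂, h₄⟩⟩

theorem isSemiBranchingSim_semiBisim : Γ.IsSemiBranchingSim Γ.SemiBisim := by
  rintro x y ⟨r, hr, hr_symm, hxy⟩ ℓ x' hs
  exact (hr hxy hs).mono fun _ _ h => ⟨r, hr, hr_symm, h⟩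

namespace SemiBisim

theorem refl (x : List C) : Γ.SemiBisim x x := by
  refine ⟨Eq, ?_, fun _ _ => Eq.symm, rfl⟩
  rintro x _ rfl ℓ x' hs
  exact .inr ⟨x, x', ReflTransGen.refl, hs, rfl, rfl⟩

theorem symm (h : Γ.SemiBisim x y) : Γ.SemiBisim y x := by
  obtain ⟨r, hr, hr_symm, hxy⟩ := h
  exact ⟨r, hr, hr_symm, hr_symm hxy⟩

theorem trans (hxy : Γ.SemiBisim x y) (hyz : Γ.SemiBisim y z) : Γ.SemiBisim x z :=
  ⟨Comp Γ.SemiBisim Γ.SemiBisim, isSemiBranchingSim_semiBisim.comp isSemiBranchingSim_semiBisim,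
    fun _ _ ⟨b, hab, hbc⟩ => ⟨b, hbc.symm, hab.symm⟩, ⟨y, hxy, hyz⟩⟩

/-- Stuttering: the witness adds to `SemiBisim` the pairs `(x, y)` with `x ⟹ y ⟹ z`, `x ≃ z`, which
`y` answers as `z` does, and their converses, which `y` answers by the move itself. -/
theorem of_tauStar_of_tauStar (hxz : Γ.SemiBisim x z) (hxy : Γ.TauStar x y)
    (hyz : Γ.TauStar y z) : Γ.SemiBisim x y := by
  let F : List C → List C → Prop := fun x y =>
    Γ.TauStar x y ∧ ∃ z, Γ.TauStar y z ∧ Γ.SemiBisim x z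
  refine ⟨Γ.SemiBisim ⊔ F ⊔ flip F, ?_, ?_, .inl (.inr ⟨hxy, z, hyz, hxz⟩)⟩
  · rintro x y ((hxy | ⟨-, z, hyz, hxz⟩) | ⟨hyx, -⟩) ℓ x' hs
    · exact (isSemiBranchingSim_semiBisim hxy hs).mono (le_sup_left.trans le_sup_left)
    · exact ((isSemiBranchingSim_semiBisim hxz hs).of_tauStar hyz).mono
        (le_sup_left.trans le_sup_left)
    · exact SemiAnswer.of_tauStar hyx
        (.inr ⟨x, x', ReflTransGen.refl, hs, .inl (.inl (refl x)), .inl (.inl (refl x'))⟩)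
  · rintro x y ((hxy | hxy) | hyx)
    exacts [.inl (.inl hxy.symm), .inr hxy, .inl (.inr hyx)]

theorem relChain (hyz : Γ.SemiBisim y z) (h : Γ.TauStar y z) :
    RelChain (Γ.Step Γ.tau) Γ.SemiBisim y y z := by
  suffices ∀ x, Γ.TauStar x z → Γ.TauStar y x → RelChain (Γ.Step Γ.tau) Γ.SemiBisim y x z from
    this y h ReflTransGen.refl
  intro x hx
  induction hx using ReflTransGen.head_induction_on with
  | refl => exact fun _ => ReflTransGen.refl
  | head hs hrest ih =>
    intro hyx
    exact ReflTransGen.head ⟨hs, hyz.of_tauStar_of_tauStar (hyx.tail hs) hrest⟩ (ih (hyx.tail hs))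

theorem exists_relChain_step (hxy : Γ.SemiBisim x y) (hs : Γ.Step ℓ x x')
    (hinert : ¬ (ℓ = Γ.tau ∧ Γ.SemiBisim x x')) :
    ∃ y'' y', RelChain (Γ.Step Γ.tau) Γ.SemiBisim y y y'' ∧ Γ.Step ℓ y'' y' ∧
      Γ.SemiBisim x y'' ∧ Γ.SemiBisim x' y' := by
  rcases isSemiBranchingSim_semiBisim hxy hs with ⟨hℓ, y', -, h₁, h₂⟩ | ⟨y'', y', hy, hs', h₁, h₂⟩
  · exact absurd ⟨hℓ, h₁.trans h₂.symm⟩ hinert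
  · exact ⟨y'', y', (hxy.symm.trans h₁).relChain hy, hs', h₁, h₂⟩

end SemiBisim

theorem isBranchingBisim_semiBisim : Γ.IsBranchingBisim Γ.SemiBisim := by
  refine ⟨⟨SemiBisim.refl, SemiBisim.symm, SemiBisim.trans⟩, fun x y hxy => ⟨?_, ?_⟩⟩
  · intro a ha x' hs
    obtain ⟨y'', y', hc, hs', -, h'⟩ := hxy.exists_relChain_step hs (ha ·.1)
    exact ⟨y'', y', hc, hs', h'⟩
  · intro x' hs hinert
    obtain ⟨y'', y', hc, hs', h'', h'⟩ := hxy.exists_relChain_step hs (hinert ·.2)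
    exact ⟨y'', y', hc, hs', fun h => hinert (h''.trans (h.trans h'.symm)), h'⟩

theorem IsBranchingBisim.isSemiBranchingSim (hr : Γ.IsBranchingBisim r) :
    Γ.IsSemiBranchingSim r := by
  obtain ⟨heq, htr⟩ := hr
  intro x y hxy ℓ x' hs
  by_cases hinert : ℓ = Γ.tau ∧ r x x'
  · exact .inl ⟨hinert.1, y, ReflTransGen.refl, hxy, heq.trans (heq.symm hinert.2) hxy⟩
  obtain ⟨y'', y', hc, hs', h'⟩ : ∃ y'' y', RelChain (Γ.Step Γ.tau) r y y y'' ∧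
      Γ.Step ℓ y'' y' ∧ r x' y' := by
    by_cases hℓ : ℓ = Γ.tau
    · subst hℓ
      obtain ⟨y'', y', hc, hs', -, h'⟩ := (htr x y hxy).2 x' hs (hinert ⟨rfl, ·⟩)
      exact ⟨y'', y', hc, hs', h'⟩
    · exact (htr x y hxy).1 ℓ hℓ x' hs
  exact .inr ⟨y'', y', hc.reflTransGen, hs', heq.trans hxy (hc.rel (heq.refl y)), h'⟩

theorem bisim_iff_semiBisim : Γ.Bisim x y ↔ Γ.SemiBisim x y :=
  ⟨fun ⟨r, hr, hxy⟩ => ⟨r, hr.isSemiBranchingSim, fun _ _ h => hr.1.symm h, hxy⟩,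
    fun h => ⟨_, isBranchingBisim_semiBisim, h⟩⟩

theorem ground_of_semiBisim_nil (hx : Γ.NormedProc x) (h : Γ.SemiBisim x []) : Γ.Ground x := by
  induction hx using ReflTransGen.head_induction_on with
  | refl => exact ReflTransGen.refl
  | head hs _ ih =>
    obtain ⟨ℓ, hs⟩ := hs
    rcases isSemiBranchingSim_semiBisim h hs with ⟨rfl, y, hy, -, h'⟩ | ⟨y'', y', hy, hs', -, -⟩
    · exact ReflTransGen.head hs (ih (eq_nil_of_tauStar_nil hy ▸ h'))
    · exact absurd (eq_nil_of_tauStar_nil hy ▸ hs') (not_step_nil _ _)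

theorem Terminates.exists_le_of_semiBisim (hn : Γ.Normed) (h : Γ.Terminates x n)
    (hxy : Γ.SemiBisim x y) : ∃ m ≤ n, Γ.Terminates y m := by
  induction h generalizing y with
  | nil =>
    exact ⟨0, le_rfl, terminates_zero_iff.2 (ground_of_semiBisim_nil (hn.normedProc y) hxy.symm)⟩
  | tau hs _ ih =>
    obtain ⟨y', hy, h'⟩ := (isSemiBranchingSim_semiBisim hxy hs).exists_tauStar
    obtain ⟨m, hm, ht⟩ := ih h'
    exact ⟨m, hm, ht.of_tauStar hy⟩
  | visible hℓ hs _ ih =>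
    rcases isSemiBranchingSim_semiBisim hxy hs with ⟨hℓ', -⟩ | ⟨y'', y', hy, hs', -, h'⟩
    · exact absurd hℓ' hℓ
    obtain ⟨m, hm, ht⟩ := ih h'
    exact ⟨m + 1, by omega, (ht.visible hℓ hs').of_tauStar hy⟩

theorem ground_of_semiBisim_append_self (hn : Γ.Normed) (h : Γ.SemiBisim (a ++ γ) γ) :
    Γ.Ground a := by
  classical
  have hγ : ∃ n, Γ.Terminates γ n := (hn.normedProc γ).exists_terminates
  obtain ⟨m, hm, ht⟩ := (Nat.find_spec hγ).exists_le_of_semiBisim hn h.symm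
  obtain ⟨k, l, rfl, hk, hl⟩ := ht.append_split
  have : Nat.find hγ ≤ l := Nat.find_min' hγ hl
  obtain rfl : k = 0 := by omega
  exact terminates_zero_iff.1 hk

theorem semiBisim_append_self_of_append (hn : Γ.Normed) (h : Γ.SemiBisim (a ++ b ++ γ) γ) :
    Γ.SemiBisim (b ++ γ) γ := by
  obtain ⟨ha, hb⟩ := (ground_of_semiBisim_append_self hn h).of_append
  have hab : Γ.TauStar (a ++ b ++ γ) (b ++ γ) := by simpa using TauStar.append_right ha (b ++ γ)
  have hb : Γ.TauStar (b ++ γ) γ := by simpa using TauStar.append_right hb γ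
  exact (h.of_tauStar_of_tauStar hab hb).symm.trans h

theorem SemiBisim.append_left (h : Γ.SemiBisim d e) (p : List C) :
    Γ.SemiBisim (p ++ d) (p ++ e) := by
  let r : List C → List C → Prop := fun x y =>
    ∃ q d e, x = q ++ d ∧ y = q ++ e ∧ Γ.SemiBisim d e
  refine ⟨r, ?_, ?_, ⟨p, d, e, rfl, rfl, h⟩⟩
  · rintro _ _ ⟨q, d, e, rfl, rfl, hde⟩ ℓ x' hs
    rcases eq_or_ne q [] with rfl | hq
    · exact (isSemiBranchingSim_semiBisim hde hs).mono fun x y h => ⟨[], x, y, rfl, rfl, h⟩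
    · obtain ⟨q', hq', rfl⟩ := hs.of_append hq
      exact .inr ⟨q ++ e, q' ++ e, ReflTransGen.refl, hq'.append_right e,
        ⟨q, d, e, rfl, rfl, hde⟩, ⟨q', d, e, rfl, rfl, hde⟩⟩
  · rintro _ _ ⟨q, d, e, rfl, rfl, hde⟩
    exact ⟨q, e, d, rfl, rfl, hde.symm⟩

theorem semiBisim_append_self_transfer (hn : Γ.Normed)
    (hred : ∀ X, Γ.SemiBisim (X :: γ₁) γ₁ ↔ Γ.SemiBisim (X :: γ₂) γ₂) :
    ∀ a, Γ.SemiBisim (a ++ γ₁) γ₁ → Γ.SemiBisim (a ++ γ₂) γ₂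
  | [], _ => SemiBisim.refl γ₂
  | X :: a, h => by
    have ha : Γ.SemiBisim (a ++ γ₁) γ₁ := semiBisim_append_self_of_append (a := [X]) hn h
    have hX : Γ.SemiBisim (X :: γ₁) γ₁ := (ha.append_left [X]).symm.trans h
    exact ((semiBisim_append_self_transfer hn hred a ha).append_left [X]).trans ((hred X).1 hX)

theorem exists_tauStar_of_reflTransGen_avoiding (hb : b ≠ [])
    (h : ReflTransGen (fun x y => Γ.Step Γ.tau x y ∧ y ≠ γ) (b ++ γ) x) :
    ∃ b', b' ≠ [] ∧ x = b' ++ γ ∧ Γ.TauStar b b' := by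
  induction h with
  | refl => exact ⟨b, hb, rfl, ReflTransGen.refl⟩
  | tail _ hstep ih =>
    obtain ⟨b', hb', rfl, hbb'⟩ := ih
    obtain ⟨hs, hne⟩ := hstep
    obtain ⟨b'', hs', rfl⟩ := hs.of_append hb'
    exact ⟨b'', by rintro rfl; exact hne rfl, rfl, hbb'.tail hs'⟩

def SuffixRel (Γ : BPA C A) (γ₁ γ₂ x y : List C) : Prop :=
  ∃ a b, x = a ++ γ₂ ∧ y = b ++ γ₂ ∧ Γ.SemiBisim (a ++ γ₁) (b ++ γ₁)

theorem semiAnswer_suffixRel_of_not_redundant (hab : Γ.SemiBisim (a ++ γ₁) (b ++ γ₁))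
    (ha : ¬ Γ.SemiBisim (a ++ γ₁) γ₁) (hs : Γ.Step ℓ (a ++ γ₂) x') :
    Γ.SemiAnswer (Γ.SuffixRel γ₁ γ₂) (a ++ γ₂) (b ++ γ₂) ℓ x' := by
  have ha_ne : a ≠ [] := by rintro rfl; exact ha (SemiBisim.refl γ₁)
  obtain ⟨a', hsa, rfl⟩ := hs.of_append ha_ne
  by_cases hinert : ℓ = Γ.tau ∧ Γ.SemiBisim (a ++ γ₁) (a' ++ γ₁)
  · exact .inl ⟨hinert.1, b ++ γ₂, ReflTransGen.refl, ⟨a, b, rfl, rfl, hab⟩,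
      ⟨a', b, rfl, rfl, hinert.2.symm.trans hab⟩⟩
  obtain ⟨y'', y', hc, hs', h'', h'⟩ := hab.exists_relChain_step (hsa.append_right γ₁) hinert
  have hb : ¬ Γ.SemiBisim (b ++ γ₁) γ₁ := fun h => ha (hab.trans h)
  have hb_ne : b ≠ [] := by rintro rfl; exact hb (SemiBisim.refl γ₁)
  obtain ⟨b₀, hb₀, rfl, hbb₀⟩ := exists_tauStar_of_reflTransGen_avoiding hb_ne
    (ReflTransGen.mono (fun _ y h => ⟨h.1, fun hy => hb (hy ▸ h.2)⟩) _ _ hc)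
  obtain ⟨b₁, hs₁, rfl⟩ := hs'.of_append hb₀
  exact .inr ⟨b₀ ++ γ₂, b₁ ++ γ₂, hbb₀.append_right γ₂, hs₁.append_right γ₂,
    ⟨a, b₀, rfl, rfl, h''⟩, ⟨a', b₁, rfl, rfl, h'⟩⟩

theorem SemiBisim.append_transfer (hn : Γ.Normed)
    (hred : ∀ X, Γ.SemiBisim (X :: γ₁) γ₁ ↔ Γ.SemiBisim (X :: γ₂) γ₂)
    (h : Γ.SemiBisim (a ++ γ₁) (b ++ γ₁)) : Γ.SemiBisim (a ++ γ₂) (b ++ γ₂) := by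
  refine ⟨Γ.SemiBisim ⊔ Γ.SuffixRel γ₁ γ₂, ?_, ?_, .inr ⟨a, b, rfl, rfl, h⟩⟩
  · rintro x y (hxy | ⟨a, b, rfl, rfl, hab⟩) ℓ x' hs
    · exact (isSemiBranchingSim_semiBisim hxy hs).mono le_sup_left
    by_cases ha : Γ.SemiBisim (a ++ γ₁) γ₁
    · have hab₂ := (semiBisim_append_self_transfer hn hred a ha).trans
        (semiBisim_append_self_transfer hn hred b (hab.symm.trans ha)).symm
      exact (isSemiBranchingSim_semiBisim hab₂ hs).mono le_sup_left
    · exact (semiAnswer_suffixRel_of_not_redundant hab ha hs).mono le_sup_right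
  · rintro x y (hxy | ⟨a, b, rfl, rfl, hab⟩)
    exacts [.inl hxy.symm, .inr ⟨b, a, rfl, rfl, hab.symm⟩]

end BPA

/-- If `Rd(γ₁) = Rd(γ₂)` then `αγ₁ ≃ βγ₁ ↔ αγ₂ ≃ βγ₂`. -/
theorem redundant_set_characterizes_bisimilarity {C A : Type} (Γ : BPA C A)
    (hΓ : Γ.Normed) (γ₁ γ₂ : List C)
    (h : {X : C | Γ.Bisim (X :: γ₁) γ₁} = {X : C | Γ.Bisim (X :: γ₂) γ₂})
    (α β : List C) :
    Γ.Bisim (α ++ γ₁) (β ++ γ₁) ↔ Γ.Bisim (α ++ γ₂) (β ++ γ₂) := by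
  have hred (X : C) : Γ.SemiBisim (X :: γ₁) γ₁ ↔ Γ.SemiBisim (X :: γ₂) γ₂ := by
    simpa only [Set.mem_ofPred_eq, BPA.bisim_iff_semiBisim] using Set.ext_iff.mp h X
  simp only [BPA.bisim_iff_semiBisim]
  exact ⟨BPA.SemiBisim.append_transfer hΓ hred,
    BPA.SemiBisim.append_transfer hΓ fun X => (hred X).symm⟩
end

section
/- Let Γ = (C, A, Δ) be a normed BPA system, R ⊆ C_G, and ≍ an equivalence relation on processes containing =_R. Then ≍ is an R-bisimulation if and only if whenever α ≍ β the following hold: (1) if α_R ⟹_R ε then β_R ⟹_R ε; (2) if α_R —τ→_R η with ¬(α ≍ η), then there exist η'' and η' such that β_R = ζ0 —τ→_R ··· —τ→_R ζk = η'' with ζi ≍ β for all i, η'' —τ→_R η', ¬(η'' ≍ η'), and η ≍ η'; (3) for every a ≠ τ, if α_R —a→_R η then there exist η'' and η' such that β_R = ζ0 —τ→_R ··· —τ→_R ζk = η'' with ζi ≍ β for all i, η'' —a→_R η', and η ≍ η'. -/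
open Relation

/-!
Every process is `=_R`-equal, hence `≍`-related, to its `R`-normal form, and an `R`-transition
`α_R —ℓ→_R η` is the image of a genuine transition `α' —ℓ→ β'` with `α' =_R α` and `β'_R = η`;
so the transfer conditions for genuine transitions and for `R`-transitions imply each other.
For the termination clause, `R ⊆ C_G` lets a suffix over `R` be erased silently, so
`α ⟹ ε` iff `α_R ⟹ ε` iff `α_R ⟹_R ε`.
-/

namespace BPA

variable {C A : Type} {Γ : BPA C A} {R : Set C}

lemma nf_append_suffix (R : Set C) (α : List C) :
    ∃ s, α = nf R α ++ s ∧ ∀ X ∈ s, X ∈ R := by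
  classical
  refine ⟨(α.reverse.takeWhile fun X => decide (X ∈ R)).reverse, ?_, fun X hX => ?_⟩
  · conv_lhs => rw [← α.reverse_reverse,
      ← List.takeWhile_append_dropWhile (p := fun X => decide (X ∈ R)) (l := α.reverse)]
    rw [List.reverse_append]
    rfl
  · simpa using List.mem_takeWhile_imp (List.mem_reverse.mp hX)

@[simp]
lemma nf_nil (R : Set C) : nf R ([] : List C) = [] := by simp [nf]

lemma rEq_nf (R : Set C) (α : List C) : REq R α (nf R α) := by
  obtain ⟨s, hs, hsR⟩ := nf_append_suffix R α
  exact ⟨nf R α, s, [], hs, by simp, hsR, by simp⟩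

lemma rEq_of_nf_eq {α β : List C} (h : nf R α = nf R β) : REq R α β := by
  obtain ⟨s, hs, hsR⟩ := nf_append_suffix R α
  obtain ⟨t, ht, htR⟩ := nf_append_suffix R β
  exact ⟨nf R α, s, t, hs, h ▸ ht, hsR, htR⟩

lemma Step.stepR {ℓ : A} {α β : List C} (h : Γ.Step ℓ α β) : Γ.StepR R ℓ (nf R α) (nf R β) :=
  ⟨α, β, rfl, rfl, h⟩

lemma Step.append_right_s4 {ℓ : A} {α β : List C} (s : List C) (h : Γ.Step ℓ α β) :
    Γ.Step ℓ (α ++ s) (β ++ s) := by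
  obtain ⟨X, γ, δ, hrule, rfl, rfl⟩ := h
  exact ⟨X, γ, δ ++ s, hrule, rfl, by simp⟩

lemma Step.of_append_s4 {ℓ : A} {ζ s q : List C} (h : Γ.Step ℓ (ζ ++ s) q) (hζ : ζ ≠ []) :
    ∃ ζ', q = ζ' ++ s ∧ Γ.Step ℓ ζ ζ' := by
  obtain ⟨X, γ, δ, hrule, hp, rfl⟩ := h
  obtain ⟨Y, ζ, rfl⟩ := List.exists_cons_of_ne_nil hζ
  obtain ⟨rfl, rfl⟩ := List.cons_eq_cons.mp hp.symm
  exact ⟨γ ++ ζ, by simp, X, γ, ζ, hrule, rfl, rfl⟩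

lemma TauStar.append_right_s4 {α β : List C} (s : List C) (h : Γ.TauStar α β) :
    Γ.TauStar (α ++ s) (β ++ s) :=
  h.lift (· ++ s) fun _ _ => Step.append_right_s4 s

lemma ground_of_forall_mem {s : List C} (h : ∀ X ∈ s, X ∈ Γ.GroundC) : Γ.Ground s := by
  induction s with
  | nil => exact .refl
  | cons X s ih =>
    exact (TauStar.append_right_s4 s (h X List.mem_cons_self)).trans
      (ih fun Y hY => h Y (List.mem_cons_of_mem X hY))

/-- A silent run of `ζ s` to `ε` must in particular consume `ζ`, by silent steps of `ζ`. -/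
lemma Ground.of_append_s4 {ζ s : List C} (h : Γ.Ground (ζ ++ s)) : Γ.Ground ζ := by
  generalize hp : ζ ++ s = p at h
  induction h using ReflTransGen.head_induction_on generalizing ζ with
  | refl => exact (List.append_eq_nil_iff.mp hp).1 ▸ .refl
  | head hstep _ ih =>
    rcases eq_or_ne ζ [] with rfl | hζ
    · exact .refl
    · obtain ⟨ζ', rfl, h'⟩ := (hp ▸ hstep).of_append_s4 hζ
      exact .head h' (ih rfl)

lemma ground_nf_iff (hR : R ⊆ Γ.GroundC) {α : List C} : Γ.Ground (nf R α) ↔ Γ.Ground α := by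
  obtain ⟨s, hs, hsR⟩ := nf_append_suffix R α
  refine ⟨fun h => ?_, fun h => Ground.of_append_s4 (s := s) (hs ▸ h)⟩
  rw [hs]
  exact (TauStar.append_right_s4 s h).trans (ground_of_forall_mem fun X hX => hR (hsR X hX))

lemma Ground.of_tauStarR (hR : R ⊆ Γ.GroundC) {ζ : List C} (h : Γ.TauStarR R ζ []) :
    Γ.Ground ζ := by
  induction h using ReflTransGen.head_induction_on with
  | refl => exact .refl
  | head hstep _ ih =>
    obtain ⟨α, β, rfl, rfl, hαβ⟩ := hstep
    exact (ground_nf_iff hR).2 (.head hαβ ((ground_nf_iff hR).1 ih))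

lemma tauStarR_nf_nil_iff (hR : R ⊆ Γ.GroundC) {α : List C} :
    Γ.TauStarR R (nf R α) [] ↔ Γ.Ground α := by
  refine ⟨fun h => (ground_nf_iff hR).1 (Ground.of_tauStarR hR h), fun h => ?_⟩
  have h' : Γ.TauStarR R (nf R α) (nf R []) := h.lift (nf R) fun _ _ => Step.stepR
  rwa [nf_nil] at h'

section Transfer

variable {r : List C → List C → Prop}

lemma exists_step_of_stepR_nf (hsub : ∀ α β, REq R α β → r α β)
    {ℓ : A} {α η : List C} (h : Γ.StepR R ℓ (nf R α) η) :
    ∃ α' β', r α α' ∧ Γ.Step ℓ α' β' ∧ r β' η := by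
  obtain ⟨α', β', hα', rfl, hstep⟩ := h
  exact ⟨α', β', hsub _ _ (rEq_of_nf_eq hα'), hstep, hsub _ _ (rEq_nf R β')⟩

lemma IsRBisim.stepR_tau_transfer (h : Γ.IsRBisim R r) {α β η : List C} (hαβ : r α β)
    (hstep : Γ.StepR R Γ.tau (nf R α) η) (hne : ¬ r α η) :
    ∃ η'' η', RelChain (Γ.StepR R Γ.tau) r β (nf R β) η'' ∧
      Γ.StepR R Γ.tau η'' η' ∧ ¬ r η'' η' ∧ r η η' := by
  obtain ⟨hEquiv, hsub, htransfer⟩ := h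
  obtain ⟨α', β', hαα', hstep', hβ'η⟩ := exists_step_of_stepR_nf hsub hstep
  have hne' : ¬ r α' β' := fun h => hne (hEquiv.trans (hEquiv.trans hαα' h) hβ'η)
  obtain ⟨η'', η', hchain, hstep'', hne'', hβ'η'⟩ :=
    (htransfer α' β (hEquiv.trans (hEquiv.symm hαα') hαβ)).2.1 β' hstep' hne'
  exact ⟨η'', η', hchain, hstep'', hne'', hEquiv.trans (hEquiv.symm hβ'η) hβ'η'⟩

lemma IsRBisim.stepR_visible_transfer (h : Γ.IsRBisim R r) {α β η : List C} (hαβ : r α β)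
    {a : A} (ha : a ≠ Γ.tau) (hstep : Γ.StepR R a (nf R α) η) :
    ∃ η'' η', RelChain (Γ.StepR R Γ.tau) r β (nf R β) η'' ∧
      Γ.StepR R a η'' η' ∧ r η η' := by
  obtain ⟨hEquiv, hsub, htransfer⟩ := h
  obtain ⟨α', β', hαα', hstep', hβ'η⟩ := exists_step_of_stepR_nf hsub hstep
  obtain ⟨η'', η', hchain, hstep'', hβ'η'⟩ :=
    (htransfer α' β (hEquiv.trans (hEquiv.symm hαα') hαβ)).2.2 a ha β' hstep'
  exact ⟨η'', η', hchain, hstep'', hEquiv.trans (hEquiv.symm hβ'η) hβ'η'⟩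

lemma tau_transfer_of_stepR (hEquiv : Equivalence r) (hsub : ∀ α β, REq R α β → r α β)
    {α β : List C}
    (htransfer : ∀ η, Γ.StepR R Γ.tau (nf R α) η → ¬ r α η →
      ∃ η'' η', RelChain (Γ.StepR R Γ.tau) r β (nf R β) η'' ∧
        Γ.StepR R Γ.tau η'' η' ∧ ¬ r η'' η' ∧ r η η')
    {α' : List C} (hstep : Γ.Step Γ.tau α α') (hne : ¬ r α α') :
    ∃ η'' η', RelChain (Γ.StepR R Γ.tau) r β (nf R β) η'' ∧
      Γ.StepR R Γ.tau η'' η' ∧ ¬ r η'' η' ∧ r α' η' := by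
  have hα' : r α' (nf R α') := hsub _ _ (rEq_nf R α')
  obtain ⟨η'', η', hchain, hstep', hne', hη'⟩ :=
    htransfer (nf R α') hstep.stepR fun h => hne (hEquiv.trans h (hEquiv.symm hα'))
  exact ⟨η'', η', hchain, hstep', hne', hEquiv.trans hα' hη'⟩

lemma visible_transfer_of_stepR (hEquiv : Equivalence r) (hsub : ∀ α β, REq R α β → r α β)
    {α β : List C} {a : A}
    (htransfer : ∀ η, Γ.StepR R a (nf R α) η →
      ∃ η'' η', RelChain (Γ.StepR R Γ.tau) r β (nf R β) η'' ∧
        Γ.StepR R a η'' η' ∧ r η η')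
    {α' : List C} (hstep : Γ.Step a α α') :
    ∃ η'' η', RelChain (Γ.StepR R Γ.tau) r β (nf R β) η'' ∧
      Γ.StepR R a η'' η' ∧ r α' η' := by
  obtain ⟨η'', η', hchain, hstep', hη'⟩ := htransfer (nf R α') hstep.stepR
  exact ⟨η'', η', hchain, hstep', hEquiv.trans (hsub _ _ (rEq_nf R α')) hη'⟩

end Transfer

end BPA

theorem RBisim_characterization_general {C A : Type} (Γ : BPA C A)
    (R : Set C) (hR : R ⊆ Γ.GroundC) (r : List C → List C → Prop)
    (hEquiv : Equivalence r) (hsub : ∀ α β, BPA.REq R α β → r α β) :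
    Γ.IsRBisim R r ↔ ∀ α β, r α β →
      ((Γ.TauStarR R (BPA.nf R α) [] → Γ.TauStarR R (BPA.nf R β) []) ∧
       (∀ η, Γ.StepR R Γ.tau (BPA.nf R α) η → ¬ r α η →
          ∃ η'' η', BPA.RelChain (Γ.StepR R Γ.tau) r β (BPA.nf R β) η'' ∧
            Γ.StepR R Γ.tau η'' η' ∧ ¬ r η'' η' ∧ r η η') ∧
       (∀ a, a ≠ Γ.tau → ∀ η, Γ.StepR R a (BPA.nf R α) η →
          ∃ η'' η', BPA.RelChain (Γ.StepR R Γ.tau) r β (BPA.nf R β) η'' ∧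
            Γ.StepR R a η'' η' ∧ r η η')) := by
  simp only [BPA.tauStarR_nf_nil_iff hR]
  constructor
  · intro h α β hαβ
    exact ⟨(h.2.2 α β hαβ).1, fun _ => h.stepR_tau_transfer hαβ,
      fun _ ha _ => h.stepR_visible_transfer hαβ ha⟩
  · intro h
    refine ⟨hEquiv, hsub, fun α β hαβ => ⟨(h α β hαβ).1, ?_, ?_⟩⟩
    · exact fun _ => BPA.tau_transfer_of_stepR hEquiv hsub (h α β hαβ).2.1
    · exact fun a ha _ => BPA.visible_transfer_of_stepR hEquiv hsub ((h α β hαβ).2.2 a ha)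

/-- Characterization of `R`-bisimulations as bisimulations on `R`-normal
forms under `R`-transitions. -/
theorem RBisim_characterization {C A : Type} (Γ : BPA C A) (hΓ : Γ.Normed)
    (R : Set C) (hR : R ⊆ Γ.GroundC) (r : List C → List C → Prop)
    (hEquiv : Equivalence r) (hsub : ∀ α β, BPA.REq R α β → r α β) :
    Γ.IsRBisim R r ↔ ∀ α β, r α β →
      ((Γ.TauStarR R (BPA.nf R α) [] → Γ.TauStarR R (BPA.nf R β) []) ∧
       (∀ η, Γ.StepR R Γ.tau (BPA.nf R α) η → ¬ r α η →
          ∃ η'' η', BPA.RelChain (Γ.StepR R Γ.tau) r β (BPA.nf R β) η'' ∧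
            Γ.StepR R Γ.tau η'' η' ∧ ¬ r η'' η' ∧ r η η') ∧
       (∀ a, a ≠ Γ.tau → ∀ η, Γ.StepR R a (BPA.nf R α) η →
          ∃ η'' η', BPA.RelChain (Γ.StepR R Γ.tau) r β (BPA.nf R β) η'' ∧
            Γ.StepR R a η'' η' ∧ r η η')) :=
  RBisim_characterization_general Γ R hR r hEquiv hsub
end
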